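/- arXiv:1906.01565 — 2 statements merged into one kernel-verified Lean document; each statement's English description precedes it below -/
import Mathlib

section
/- Let m be a natural number divisible by 4 and ζ_m a primitive m-th root of unity in an algebraic closure of ℚ. Then −ζ_m is not a square in the cyclotomic field ℚ(μ_m). -/
/-!
If `u ^ 2 = -ζ`, then `u` is a root of unity. For even `m` the roots of unity of `ℚ(μ_m)` are
exactly `μ_m`, so `u ^ m = 1`. But with `m = 4k` we get `u ^ m = (-ζ) ^ (2k) = ζ ^ (2k) ≠ 1`.
-/

theorem IsCyclotomicExtension.Rat.pow_eq_one_of_even {n : ℕ} [NeZero n] {K : Type*} [Field K]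
    [NumberField K] [IsCyclotomicExtension {n} ℚ K] (hn : Even n) {x : K} {k : ℕ} (hk : k ≠ 0)
    (hx : x ^ k = 1) : x ^ n = 1 := by
  have : NeZero (orderOf x) :=
    ⟨(isOfFinOrder_iff_pow_eq_one.mpr ⟨k, Nat.pos_of_ne_zero hk, hx⟩).orderOf_pos.ne'⟩
  have hdvd := NumberField.Units.dvd_torsionOrder_of_isPrimitiveRoot (IsPrimitiveRoot.orderOf x)
  rw [IsCyclotomicExtension.Rat.torsionOrder_eq (n := n), if_pos hn] at hdvd
  exact orderOf_dvd_iff_pow_eq_one.mp hdvd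

namespace IsPrimitiveRoot

variable {R : Type*} [CommRing R] {ζ u : R} {m : ℕ}

theorem pow_two_mul_eq_one_of_sq_eq_neg (hζ : IsPrimitiveRoot ζ m) (hm : Even m)
    (hu : u ^ 2 = -ζ) : u ^ (2 * m) = 1 := by
  rw [pow_mul, hu, hm.neg_pow, hζ.pow_eq_one]

theorem pow_ne_one_of_sq_eq_neg (hζ : IsPrimitiveRoot ζ m) (hm : 4 ∣ m) (hm₀ : m ≠ 0)
    (hu : u ^ 2 = -ζ) : u ^ m ≠ 1 := by
  obtain ⟨k, rfl⟩ := hm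
  have hu_pow : u ^ (4 * k) = ζ ^ (2 * k) := by
    rw [show 4 * k = 2 * (2 * k) by ring, pow_mul, hu, (even_two_mul k).neg_pow]
  rw [hu_pow]
  exact hζ.pow_ne_one_of_pos_of_lt (by omega) (by omega)

end IsPrimitiveRoot

/-- if `4 ∣ m` and `ζ` is a primitive `m`-th root of unity, then `−ζ` is not a
square in the cyclotomic field `ℚ(μ_m)`. -/
theorem statement5 (m : ℕ+) (hm : 4 ∣ (m : ℕ)) (ζ : CyclotomicField m ℚ)
    (hζ : IsPrimitiveRoot ζ m) : ¬ ∃ u : CyclotomicField m ℚ, u ^ 2 = -ζ := by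
  rintro ⟨u, hu⟩
  -- instance search would use `DivisionRing.toRatAlgebra` and fail, so supply it by hand
  have : IsCyclotomicExtension {(m : ℕ)} ℚ (CyclotomicField m ℚ) :=
    CyclotomicField.instIsCyclotomicExtensionSingletonNatSetOfCharZero _ _
  have hm_even : Even (m : ℕ) := even_iff_two_dvd.mpr ((dvd_mul_right 2 2).trans hm)
  refine hζ.pow_ne_one_of_sq_eq_neg hm m.ne_zero hu ?_
  exact IsCyclotomicExtension.Rat.pow_eq_one_of_even hm_even (by positivity)
    (hζ.pow_two_mul_eq_one_of_sq_eq_neg hm_even hu)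
end

section
/- Let E/K be a finite abelian extension of number fields with group G and let χ be a character of G. Let S be a finite set of places of K containing the archimedean places and the ramified places. Then the order of vanishing at s = 0 of the S-truncated Artin L-function L_S(χ, s) equals the ℚ^c-dimension of the χ-component X_{E,S}^χ, which equals |{v ∈ S : χ(G_v) = 1}| if χ ≠ 1, and |S| − 1 if χ = 1, where G_v ≤ G is the decomposition group of v. -/
/-!
A `χ`-eigenvector `f` on the `G`-set `⨿_{v ∈ S} G ⧸ D v` satisfies `χ g * f (g • t) = f t`,
so it is determined by its values at the base cosets `D v`. The base coset of `v` is fixed by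
`D v`, so the value there vanishes unless `χ` is trivial on `D v`; when it is, `χ⁻¹` descends to
`G ⧸ D v` and any value there extends to an eigenvector. Hence the eigenspace has dimension
`|{v ∈ S : χ(D v) = 1}|`. The augmentation is `G`-invariant, so it kills the `χ`-eigenspace for
`χ ≠ 1`, while for `χ = 1` it is nonzero on the constant function `1` (when there are places at
all): passing to its kernel lowers the dimension by one.
-/

noncomputable section
open scoped Classical

/-- The augmentation map `Y_{E,S} = (S_E →₀ ℂ) → ℂ` sending each place to `1`. -/
def augMap (T : Type*) : (T →₀ ℂ) →ₗ[ℂ] ℂ :=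
  Finsupp.linearCombination ℂ fun _ => (1 : ℂ)

/-- The action of `g ∈ G` on the free module on a `G`-set `T`. -/
def rhoMap (G T : Type*) [Monoid G] [MulAction G T] (g : G) :
    (T →₀ ℂ) →ₗ[ℂ] (T →₀ ℂ) :=
  Finsupp.lmapDomain ℂ ℂ fun w => g • w

/-- The `χ`-eigenspace of `ℂ ⊗ Y_{E,S}`. -/
def eigSub (G T : Type*) [Monoid G] [MulAction G T] (χ : G →* ℂˣ) :
    Submodule ℂ (T →₀ ℂ) :=
  ⨅ g : G, LinearMap.ker (rhoMap G T g - (χ g : ℂ) • LinearMap.id)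

/-- The `χ`-component `X_{E,S}^χ` of the augmentation kernel. -/
def XchiSub (G T : Type*) [Monoid G] [MulAction G T] (χ : G →* ℂˣ) :
    Submodule ℂ (T →₀ ℂ) :=
  LinearMap.ker (augMap T) ⊓ eigSub G T χ

section Eigenspace

variable {G T : Type*} [Group G] [MulAction G T] {χ : G →* ℂˣ} {f : T →₀ ℂ}

theorem rhoMap_eq_smul_of_mem_eigSub (hf : f ∈ eigSub G T χ) (g : G) :
    rhoMap G T g f = (χ g : ℂ) • f := by
  have := Submodule.mem_iInf _ |>.mp hf g
  rwa [LinearMap.mem_ker, LinearMap.sub_apply, sub_eq_zero] at this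

theorem mem_eigSub_iff :
    f ∈ eigSub G T χ ↔ ∀ (g : G) (t : T), (χ g : ℂ) * f (g • t) = f t := by
  have rhoMap_apply_smul (g : G) (t : T) : rhoMap G T g f (g • t) = f t :=
    Finsupp.mapDomain_apply (MulAction.injective g) f t
  refine ⟨fun hf g t => ?_, fun h => Submodule.mem_iInf _ |>.mpr fun g => ?_⟩
  · rw [← rhoMap_apply_smul g t, rhoMap_eq_smul_of_mem_eigSub hf g, Finsupp.smul_apply, smul_eq_mul]
  · rw [LinearMap.mem_ker, LinearMap.sub_apply, sub_eq_zero]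
    ext t
    obtain ⟨t, rfl⟩ := MulAction.surjective g t
    rw [rhoMap_apply_smul, LinearMap.smul_apply, LinearMap.id_apply, Finsupp.smul_apply,
      smul_eq_mul, h]

theorem apply_smul_eq_zero_of_mem_eigSub (hf : f ∈ eigSub G T χ) {t : T} (ht : f t = 0)
    (g : G) : f (g • t) = 0 := by
  have := mem_eigSub_iff.mp hf g t
  rwa [ht, mul_eq_zero, or_iff_right (Units.ne_zero _)] at this

theorem apply_eq_zero_of_mem_eigSub (hf : f ∈ eigSub G T χ) {g : G} {t : T}
    (hgt : g • t = t) (hχg : χ g ≠ 1) : f t = 0 := by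
  by_contra ht
  have := mem_eigSub_iff.mp hf g t
  rw [hgt, mul_eq_right₀ ht] at this
  exact hχg (Units.val_eq_one.mp this)

theorem augMap_rhoMap (g : G) (f : T →₀ ℂ) : augMap T (rhoMap G T g f) = augMap T f :=
  Finsupp.linearCombination_mapDomain ℂ _ f

theorem augMap_eq_zero_of_mem_eigSub (hχ : χ ≠ 1) (hf : f ∈ eigSub G T χ) :
    augMap T f = 0 := by
  obtain ⟨g, hχg⟩ : ∃ g, χ g ≠ 1 := by
    by_contra! h
    exact hχ (MonoidHom.ext h)
  by_contra hf0
  have := augMap_rhoMap g f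
  rw [rhoMap_eq_smul_of_mem_eigSub hf, map_smul, smul_eq_mul, mul_eq_right₀ hf0] at this
  exact hχg (Units.val_eq_one.mp this)

theorem augMap_equivFunOnFinite_symm_one [Fintype T] :
    augMap T (Finsupp.equivFunOnFinite.symm 1) = Fintype.card T := by
  simp [augMap, Finsupp.linearCombination_apply, Finsupp.sum_fintype]

theorem equivFunOnFinite_symm_one_mem_eigSub [Finite T] :
    Finsupp.equivFunOnFinite.symm 1 ∈ eigSub G T 1 :=
  mem_eigSub_iff.mpr fun g t => by simp

end Eigenspace

section Augmentation

variable {G T : Type*} [Group G] [MulAction G T] (χ : G →* ℂˣ)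

theorem XchiSub_eq_map_ker :
    XchiSub G T χ =
      ((augMap T).comp (eigSub G T χ).subtype).ker.map (eigSub G T χ).subtype := by
  rw [LinearMap.ker_comp, Submodule.map_comap_subtype, XchiSub, inf_comm]

theorem finrank_range_augMap_comp_subtype [Finite T] [Nonempty T] [Decidable (χ = 1)] :
    Module.finrank ℂ ((augMap T).comp (eigSub G T χ).subtype).range =
      if χ = 1 then 1 else 0 := by
  split_ifs with hχ
  · subst hχ
    have := Fintype.ofFinite T
    have hrange : ((augMap T).comp (eigSub G T 1).subtype).range ≠ ⊥ :=
      (Submodule.ne_bot_iff _).mpr ⟨Fintype.card T, ⟨⟨_, equivFunOnFinite_symm_one_mem_eigSub⟩,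
        augMap_equivFunOnFinite_symm_one⟩, Nat.cast_ne_zero.mpr Fintype.card_ne_zero⟩
    rw [(Ideal.eq_bot_or_top _).resolve_left hrange, finrank_top, Module.finrank_self]
  · rw [LinearMap.range_eq_bot.mpr, finrank_bot]
    ext ⟨f, hf⟩
    exact augMap_eq_zero_of_mem_eigSub hχ hf

theorem finrank_XchiSub [Finite T] [Decidable (χ = 1)] :
    Module.finrank ℂ (XchiSub G T χ) =
      Module.finrank ℂ (eigSub G T χ) - if χ = 1 then 1 else 0 := by
  rcases isEmpty_or_nonempty T with hT | hT
  · simp [Module.finrank_zero_of_subsingleton]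
  have := LinearMap.finrank_range_add_finrank_ker (K := ℂ) (V := eigSub G T χ)
    ((augMap T).comp (eigSub G T χ).subtype)
  rw [finrank_range_augMap_comp_subtype] at this
  rw [XchiSub_eq_map_ker, Submodule.finrank_map_subtype_eq]
  omega

end Augmentation

section Cosets

variable {G I : Type*} [CommGroup G] (χ : G →* ℂˣ) (H : I → Subgroup G)

theorem QuotientGroup.lift_smul {N : Subgroup G} (hN : N ≤ χ.ker) (g : G) (w : G ⧸ N) :
    QuotientGroup.lift N χ hN (g • w) = χ g * QuotientGroup.lift N χ hN w := by
  induction w using QuotientGroup.induction_on with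
  | H a =>
    rw [MulAction.Quotient.smul_mk, smul_eq_mul, QuotientGroup.lift_mk, QuotientGroup.lift_mk,
      map_mul]

theorem smul_sigma_mk_one (a : G) (i : I) : a • (⟨i, 1⟩ : Σ i, G ⧸ H i) = ⟨i, a⟩ := by
  rw [Sigma.smul_mk, ← QuotientGroup.mk_one, MulAction.Quotient.smul_mk, smul_eq_mul, mul_one]

def evalBasepoints : eigSub G (Σ i, G ⧸ H i) χ →ₗ[ℂ] ({i // ∀ g ∈ H i, χ g = 1} → ℂ) :=
  LinearMap.pi fun i => (Finsupp.lapply ⟨i.1, 1⟩).comp (eigSub G _ χ).subtype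

theorem evalBasepoints_injective : Function.Injective (evalBasepoints χ H) := by
  refine (injective_iff_map_eq_zero _).mpr ?_
  rintro ⟨f, hf⟩ hf0
  have basepoint_eq_zero (i : I) : f ⟨i, 1⟩ = 0 := by
    by_cases hi : ∀ g ∈ H i, χ g = 1
    · exact congr_fun hf0 ⟨i, hi⟩
    · push Not at hi
      obtain ⟨g, hgH, hχg⟩ := hi
      refine apply_eq_zero_of_mem_eigSub hf (g := g) ?_ hχg
      rw [smul_sigma_mk_one, (QuotientGroup.eq_one_iff g).mpr hgH]
  ext ⟨i, w⟩
  obtain ⟨a, rfl⟩ := QuotientGroup.mk_surjective w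
  have := apply_smul_eq_zero_of_mem_eigSub hf (basepoint_eq_zero i) a
  rwa [smul_sigma_mk_one] at this

theorem evalBasepoints_surjective [Finite G] [Finite I] :
    Function.Surjective (evalBasepoints χ H) := by
  intro c
  let F : (Σ i, G ⧸ H i) → ℂ := fun t =>
    if hi : ∀ g ∈ H t.1, χ g = 1 then
      c ⟨t.1, hi⟩ *
        ((QuotientGroup.lift (H t.1) χ fun g hg => MonoidHom.mem_ker.mpr (hi g hg)) t.2)⁻¹
    else 0
  have hF : Finsupp.equivFunOnFinite.symm F ∈ eigSub G _ χ := by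
    refine mem_eigSub_iff.mpr fun g ⟨i, w⟩ => ?_
    simp only [Finsupp.coe_equivFunOnFinite_symm, F, Sigma.smul_mk]
    split_ifs
    · rw [QuotientGroup.lift_smul]
      push_cast
      field_simp
    · rw [mul_zero]
  refine ⟨⟨_, hF⟩, funext fun i => ?_⟩
  simp only [evalBasepoints, F, LinearMap.pi_apply, LinearMap.comp_apply,
    Submodule.subtype_apply, Finsupp.lapply_apply, Finsupp.coe_equivFunOnFinite_symm, dif_pos i.2]
  simp

theorem finrank_eigSub_sigma_quotient [Finite G] [Fintype I] :
    Module.finrank ℂ (eigSub G (Σ i, G ⧸ H i) χ) = Nat.card {i // ∀ g ∈ H i, χ g = 1} := by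
  rw [LinearEquiv.finrank_eq (LinearEquiv.ofBijective _
      ⟨evalBasepoints_injective χ H, evalBasepoints_surjective χ H⟩),
    Module.finrank_fintype_fun_eq_card, Nat.card_eq_fintype_card]

end Cosets

theorem statement13_general (G : Type) [CommGroup G] [Fintype G] (ι : Type)
    (S : Finset ι) (D : ι → Subgroup G) (χ : G →* ℂˣ) :
    Module.finrank ℂ ↥(XchiSub G ((v : {x // x ∈ S}) × (G ⧸ D v.val)) χ) =
      (S.filter fun v => ∀ g ∈ D v, χ g = 1).card - (if χ = 1 then 1 else 0) := by
  have card_eq : Nat.card {v : S // ∀ g ∈ D v, χ g = 1} =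
      (S.filter fun v => ∀ g ∈ D v, χ g = 1).card := by
    rw [Nat.card_eq_fintype_card, Fintype.card_subtype,
      ← Finset.card_map (Function.Embedding.subtype _)]
    congr 1
    ext v
    simp [and_comm]
  rw [finrank_XchiSub, finrank_eigSub_sigma_quotient, card_eq]

/-- Tate, Chap. I, Prop. 3.4, algebraic form: let `E/K` be finite abelian
with group `G`, `χ` a character of `G` and `S` a nonempty finite set of places of `K`
(containing the archimedean and ramified places), with decomposition groups `D v ≤ G` for
`v ∈ S`, so that the `G`-set of places of `E` above `S` is `⨿_{v ∈ S} G/D v`.  Then the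
order of vanishing of `L_S(χ,s)` at `s = 0`, which equals `dim_{ℚ^c} X_{E,S}^χ`, is
`|{v ∈ S : χ(D v) = 1}|` if `χ ≠ 1` and `|S| − 1` if `χ = 1`. -/
theorem statement13 (G : Type) [CommGroup G] [Fintype G] (ι : Type) [DecidableEq ι]
    (S : Finset ι) (hS : S.Nonempty) (D : ι → Subgroup G) (χ : G →* ℂˣ) :
    Module.finrank ℂ ↥(XchiSub G ((v : {x // x ∈ S}) × (G ⧸ D v.val)) χ) =
      (S.filter fun v => ∀ g ∈ D v, χ g = 1).card - (if χ = 1 then 1 else 0) :=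
  statement13_general G ι S D χ
end
end
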